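/- Let f_1,...,f_n : ℝ^d → ℝ each be L-smooth (gradients L-Lipschitz). Fix θ, θ̄ ∈ ℝ^d, let I be a uniformly random b-subset of [n] and define the (first-order) SVRG direction v = (1/b)∑_{i∈I} ∇f_i(θ) − (1/b)∑_{i∈I} ∇f_i(θ̄) + ∇f(θ̄) where f = (1/n)∑ f_i. Then E[‖v − ∇f(θ)‖²] ≤ (4L²/b) ‖θ − θ̄‖². -/

import Mathlib

/-!
With `g i = ∇fᵢ(θ) - ∇fᵢ(θ̄)`, the SVRG direction minus `∇f(θ)` is the deviation of the mean
of `g` over the random subset `I` from its mean over all of `[n]`. Expanding the square and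
counting the `b`-subsets that contain a given pair of indices shows that, for sampling without
replacement, this deviation has mean square at most `1/b` times the population variance of `g`.
By `L`-smoothness each `g i` has norm at most `L‖θ - θ̄‖`, so each `g i` lies within
`2L‖θ - θ̄‖` of the mean.
-/

open Finset
open scoped RealInnerProductSpace

theorem card_filter_powersetCard_subset_eq_ite {α : Type*} [DecidableEq α] {s t : Finset α}
    (hts : t ⊆ s) (b : ℕ) :
    #{I ∈ s.powersetCard b | t ⊆ I} = if #t ≤ b then (#s - #t).choose (b - #t) else 0 := by
  split_ifs with htb
  · exact card_filter_powersetCard_subset t s b hts htb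
  · refine card_eq_zero.mpr (filter_eq_empty_iff.mpr fun I hI htI => htb ?_)
    exact (card_le_card htI).trans (mem_powersetCard.mp hI).2.le

theorem inv_card_mul_sum_le {ι : Type*} [Fintype ι] {a : ι → ℝ} {M : ℝ} (hM : 0 ≤ M)
    (ha : ∀ i, a i ≤ M) : (Fintype.card ι : ℝ)⁻¹ * ∑ i, a i ≤ M := by
  rcases eq_or_ne (Fintype.card ι : ℝ) 0 with hn | hn
  · simpa [hn] using hM
  calc (Fintype.card ι : ℝ)⁻¹ * ∑ i, a i ≤ (Fintype.card ι : ℝ)⁻¹ * (Fintype.card ι * M) := by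
        gcongr
        simpa using sum_le_card_nsmul univ a M fun i _ => ha i
    _ = M := inv_mul_cancel_left₀ hn M

theorem choose_pred_div_choose_le (n b : ℕ) (hb : 0 < b) :
    ((n - 1).choose (b - 1) : ℝ) / n.choose b ≤ b / n := by
  -- equality unless `n.choose b = 0`, where the left side is a junk `0`
  rcases Nat.eq_zero_or_pos n with rfl | hn
  · simp [Nat.choose_eq_zero_of_lt hb]
  have key := Nat.add_one_mul_choose_eq (n - 1) (b - 1)
  rw [Nat.sub_add_cancel hn, Nat.sub_add_cancel hb] at key
  rcases Nat.eq_zero_or_pos (n.choose b) with hnb | hnb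
  · simp [hnb]
    positivity
  · rw [div_le_div_iff₀ (by exact_mod_cast hnb) (by exact_mod_cast hn)]
    have key' : (n : ℝ) * (n - 1).choose (b - 1) = n.choose b * b := by exact_mod_cast key
    linarith

section Sampling

variable {ι E : Type*} [NormedAddCommGroup E] [InnerProductSpace ℝ E]

theorem sum_sum_ite_mul_inner [Fintype ι] [DecidableEq ι] (h : ι → E) (A B : ℝ) :
    ∑ i, ∑ j, (if i = j then A else B) * ⟪h i, h j⟫ =
      (A - B) * ∑ i, ‖h i‖ ^ 2 + B * ‖∑ i, h i‖ ^ 2 := by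
  have hsplit : ∀ i j, (if i = j then A else B) * ⟪h i, h j⟫ =
      (if i = j then (A - B) * ‖h i‖ ^ 2 else 0) + B * ⟪h i, h j⟫ := by
    intro i j
    split_ifs with hij
    · subst hij; rw [real_inner_self_eq_norm_sq]; ring
    · ring
  simp only [hsplit, sum_add_distrib, sum_ite_eq, mem_univ, if_true, ← mul_sum, ← inner_sum,
    ← sum_inner, real_inner_self_eq_norm_sq]

theorem sum_powersetCard_norm_sum_sq [Fintype ι] [DecidableEq ι] (b : ℕ) (h : ι → E) :
    ∑ I ∈ powersetCard b univ, ‖∑ i ∈ I, h i‖ ^ 2 =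
      ∑ i, ∑ j, (#{I ∈ powersetCard b univ | {i, j} ⊆ I} : ℝ) * ⟪h i, h j⟫ := by
  calc ∑ I ∈ powersetCard b univ, ‖∑ i ∈ I, h i‖ ^ 2
      = ∑ I ∈ powersetCard b univ, ∑ i, ∑ j, if {i, j} ⊆ I then ⟪h i, h j⟫ else 0 := by
        refine sum_congr rfl fun I _ => ?_
        rw [← real_inner_self_eq_norm_sq, sum_inner]
        simp only [inner_sum, insert_subset_iff, singleton_subset_iff, ite_and, sum_ite_irrel,
          sum_const_zero, sum_ite_mem, univ_inter]
    _ = _ := by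
        rw [sum_comm]
        refine sum_congr rfl fun i _ => ?_
        rw [sum_comm]
        refine sum_congr rfl fun j _ => ?_
        rw [sum_ite, sum_const_zero, add_zero, sum_const, nsmul_eq_mul]

theorem sum_powersetCard_norm_sum_sq_le [Fintype ι] [DecidableEq ι] {b : ℕ} (hb : 0 < b)
    (h : ι → E) (hh : ∑ i, h i = 0) :
    ∑ I ∈ powersetCard b univ, ‖∑ i ∈ I, h i‖ ^ 2 ≤
      ((Fintype.card ι - 1).choose (b - 1) : ℝ) * ∑ i, ‖h i‖ ^ 2 := by
  set N : ℕ → ℝ := fun k => if k ≤ b then ((Fintype.card ι - k).choose (b - k) : ℝ) else 0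
  have hcount : ∀ i j : ι,
      (#{I ∈ powersetCard b univ | {i, j} ⊆ I} : ℝ) = if i = j then N 1 else N 2 := by
    intro i j
    rw [card_filter_powersetCard_subset_eq_ite (subset_univ _), card_univ, Nat.cast_ite,
      Nat.cast_zero]
    by_cases hij : i = j
    · rw [if_pos hij, hij, pair_eq_singleton, card_singleton]
    · rw [if_neg hij, card_pair hij]
  have hN2 : 0 ≤ N 2 := by simp only [N]; split_ifs <;> positivity
  rw [sum_powersetCard_norm_sum_sq]
  simp only [hcount]
  rw [sum_sum_ite_mul_inner, hh, norm_zero, show N 1 = _ from if_pos hb]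
  have hS : 0 ≤ ∑ i, ‖h i‖ ^ 2 := sum_nonneg fun i _ => sq_nonneg _
  nlinarith [mul_nonneg hN2 hS]

theorem inv_card_smul_sum_sub (I : Finset ι) (hI : I.Nonempty) (g : ι → E) (μ : E) :
    (#I : ℝ)⁻¹ • ∑ i ∈ I, (g i - μ) = (#I : ℝ)⁻¹ • ∑ i ∈ I, g i - μ := by
  have hI0 : (#I : ℝ) ≠ 0 := by exact_mod_cast hI.card_ne_zero
  rw [sum_sub_distrib, sum_const, ← Nat.cast_smul_eq_nsmul ℝ, smul_sub, smul_smul,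
    inv_mul_cancel₀ hI0, one_smul]

theorem sum_sub_mean_eq_zero [Fintype ι] (g : ι → E) :
    ∑ i, (g i - (Fintype.card ι : ℝ)⁻¹ • ∑ j, g j) = 0 := by
  rcases isEmpty_or_nonempty ι with hι | hι
  · exact sum_of_isEmpty _
  have hn : (Fintype.card ι : ℝ) ≠ 0 := by exact_mod_cast Fintype.card_ne_zero
  rw [sum_sub_distrib, sum_const, card_univ, ← Nat.cast_smul_eq_nsmul ℝ, smul_smul,
    mul_inv_cancel₀ hn, one_smul, sub_self]

theorem inv_card_mul_sum_powersetCard_norm_sub_mean_sq_le [Fintype ι] [DecidableEq ι] {b : ℕ}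
    (hb : 0 < b) (g : ι → E) :
    (#(powersetCard b (univ : Finset ι)) : ℝ)⁻¹ * ∑ I ∈ powersetCard b univ,
        ‖(b : ℝ)⁻¹ • ∑ i ∈ I, g i - (Fintype.card ι : ℝ)⁻¹ • ∑ i, g i‖ ^ 2 ≤
      (b : ℝ)⁻¹ * ((Fintype.card ι : ℝ)⁻¹ *
        ∑ i, ‖g i - (Fintype.card ι : ℝ)⁻¹ • ∑ j, g j‖ ^ 2) := by
  set n := Fintype.card ι
  set h : ι → E := fun i => g i - (n : ℝ)⁻¹ • ∑ j, g j
  have hsample : ∀ I ∈ powersetCard b (univ : Finset ι),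
      ‖(b : ℝ)⁻¹ • ∑ i ∈ I, g i - (n : ℝ)⁻¹ • ∑ i, g i‖ ^ 2 =
        (b : ℝ)⁻¹ ^ 2 * ‖∑ i ∈ I, h i‖ ^ 2 := by
    intro I hI
    have hIb : #I = b := (mem_powersetCard.mp hI).2
    have hIne : I.Nonempty := card_pos.mp (hIb ▸ hb)
    rw [← hIb, ← inv_card_smul_sum_sub I hIne, norm_smul, mul_pow, Real.norm_eq_abs, sq_abs]
  rw [sum_congr rfl hsample, ← mul_sum, card_powersetCard, card_univ]
  calc ((n.choose b : ℕ) : ℝ)⁻¹ * ((b : ℝ)⁻¹ ^ 2 * ∑ I ∈ powersetCard b univ, ‖∑ i ∈ I, h i‖ ^ 2)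
      ≤ ((n.choose b : ℕ) : ℝ)⁻¹ * ((b : ℝ)⁻¹ ^ 2 *
          (((n - 1).choose (b - 1) : ℝ) * ∑ i, ‖h i‖ ^ 2)) := by
        gcongr
        exact sum_powersetCard_norm_sum_sq_le hb h (sum_sub_mean_eq_zero g)
    _ = (b : ℝ)⁻¹ ^ 2 * (((n - 1).choose (b - 1) : ℝ) / n.choose b) * ∑ i, ‖h i‖ ^ 2 := by
        ring
    _ ≤ (b : ℝ)⁻¹ ^ 2 * (b / n) * ∑ i, ‖h i‖ ^ 2 := by
        gcongr (b : ℝ)⁻¹ ^ 2 * ?_ * _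
        exact choose_pred_div_choose_le n b hb
    _ = (b : ℝ)⁻¹ * ((n : ℝ)⁻¹ * ∑ i, ‖h i‖ ^ 2) := by
        field_simp

theorem norm_sub_mean_le [Fintype ι] {M : ℝ} (g : ι → E) (hg : ∀ i, ‖g i‖ ≤ M) (i : ι) :
    ‖g i - (Fintype.card ι : ℝ)⁻¹ • ∑ j, g j‖ ≤ 2 * M := by
  have hn : (0 : ℝ) < Fintype.card ι := by exact_mod_cast Fintype.card_pos_iff.mpr ⟨i⟩
  have hmean : ‖(Fintype.card ι : ℝ)⁻¹ • ∑ j, g j‖ ≤ M := by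
    rw [norm_smul, norm_inv, RCLike.norm_natCast, inv_mul_le_iff₀ hn]
    calc ‖∑ j, g j‖ ≤ ∑ j, ‖g j‖ := norm_sum_le _ _
      _ ≤ ∑ _j : ι, M := sum_le_sum fun j _ => hg j
      _ = Fintype.card ι * M := by rw [sum_const, card_univ, nsmul_eq_mul]
  linarith [norm_sub_le (g i) ((Fintype.card ι : ℝ)⁻¹ • ∑ j, g j), hg i]

end Sampling

theorem hasGradientAt_const_mul_sum {F ι : Type*} [NormedAddCommGroup F] [InnerProductSpace ℝ F]
    [CompleteSpace F] (s : Finset ι) (c : ℝ) {f : ι → F → ℝ} {f' : ι → F} {x : F}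
    (hf : ∀ i ∈ s, HasGradientAt (f i) (f' i) x) :
    HasGradientAt (fun y => c * ∑ i ∈ s, f i y) (c • ∑ i ∈ s, f' i) x := by
  simp only [hasGradientAt_iff_hasFDerivAt] at hf ⊢
  rw [map_smul, map_sum]
  exact (HasFDerivAt.fun_sum hf).const_mul c

theorem svrg_variance_bound_general (n d b : ℕ) (hb : 0 < b)
    (f : Fin n → EuclideanSpace ℝ (Fin d) → ℝ) (L : ℝ)
    (hdiff : ∀ i, Differentiable ℝ (f i))
    (hlip : ∀ i, ∀ x y : EuclideanSpace ℝ (Fin d),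
      ‖gradient (f i) x - gradient (f i) y‖ ≤ L * ‖x - y‖)
    (θ θbar : EuclideanSpace ℝ (Fin d)) :
    ((Finset.powersetCard b (Finset.univ : Finset (Fin n))).card : ℝ)⁻¹ *
      ∑ I ∈ Finset.powersetCard b (Finset.univ : Finset (Fin n)),
        ‖((b : ℝ)⁻¹ • ∑ i ∈ I, gradient (f i) θ) - ((b : ℝ)⁻¹ • ∑ i ∈ I, gradient (f i) θbar)
          + gradient (fun x => (n : ℝ)⁻¹ * ∑ j : Fin n, f j x) θbar
          - gradient (fun x => (n : ℝ)⁻¹ * ∑ j : Fin n, f j x) θ‖ ^ 2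
    ≤ (4 * L ^ 2 / (b : ℝ)) * ‖θ - θbar‖ ^ 2 := by
  set g : Fin n → EuclideanSpace ℝ (Fin d) := fun i => gradient (f i) θ - gradient (f i) θbar
  have hgrad_mean : ∀ y, gradient (fun x => (n : ℝ)⁻¹ * ∑ j : Fin n, f j x) y =
      (n : ℝ)⁻¹ • ∑ j, gradient (f j) y := fun y =>
    (hasGradientAt_const_mul_sum univ _ fun j _ => (hdiff j y).hasGradientAt).gradient
  have hdirection : ∀ I : Finset (Fin n),
      ((b : ℝ)⁻¹ • ∑ i ∈ I, gradient (f i) θ) - ((b : ℝ)⁻¹ • ∑ i ∈ I, gradient (f i) θbar)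
          + gradient (fun x => (n : ℝ)⁻¹ * ∑ j : Fin n, f j x) θbar
          - gradient (fun x => (n : ℝ)⁻¹ * ∑ j : Fin n, f j x) θ =
        (b : ℝ)⁻¹ • ∑ i ∈ I, g i - (Fintype.card (Fin n) : ℝ)⁻¹ • ∑ i, g i := by
    intro I
    simp only [hgrad_mean, g, Fintype.card_fin, sum_sub_distrib, smul_sub]
    abel
  have hdeviation :
      ∀ i, ‖g i - (Fintype.card (Fin n) : ℝ)⁻¹ • ∑ j, g j‖ ≤ 2 * (L * ‖θ - θbar‖) :=
    norm_sub_mean_le g fun i => hlip i θ θbar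
  simp only [hdirection]
  calc _ ≤ (b : ℝ)⁻¹ * ((Fintype.card (Fin n) : ℝ)⁻¹ *
          ∑ i, ‖g i - (Fintype.card (Fin n) : ℝ)⁻¹ • ∑ j, g j‖ ^ 2) :=
        inv_card_mul_sum_powersetCard_norm_sub_mean_sq_le hb g
    _ ≤ (b : ℝ)⁻¹ * (2 * (L * ‖θ - θbar‖)) ^ 2 := by
        gcongr
        exact inv_card_mul_sum_le (sq_nonneg _) fun i =>
          pow_le_pow_left₀ (norm_nonneg _) (hdeviation i) 2
    _ = (4 * L ^ 2 / (b : ℝ)) * ‖θ - θbar‖ ^ 2 := by ring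

/-- SVRG variance bound: the mean-squared deviation of the variance-reduced direction
from the true gradient is at most `4L²/b · ‖θ - θ̄‖²`. -/
theorem svrg_variance_bound (n d b : ℕ) (hb : 0 < b) (hbn : b ≤ n)
    (f : Fin n → EuclideanSpace ℝ (Fin d) → ℝ) (L : ℝ) (hL : 0 ≤ L)
    (hdiff : ∀ i, Differentiable ℝ (f i))
    (hlip : ∀ i, ∀ x y : EuclideanSpace ℝ (Fin d),
      ‖gradient (f i) x - gradient (f i) y‖ ≤ L * ‖x - y‖)
    (θ θbar : EuclideanSpace ℝ (Fin d)) :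
    ((Finset.powersetCard b (Finset.univ : Finset (Fin n))).card : ℝ)⁻¹ *
      ∑ I ∈ Finset.powersetCard b (Finset.univ : Finset (Fin n)),
        ‖((b : ℝ)⁻¹ • ∑ i ∈ I, gradient (f i) θ) - ((b : ℝ)⁻¹ • ∑ i ∈ I, gradient (f i) θbar)
          + gradient (fun x => (n : ℝ)⁻¹ * ∑ j : Fin n, f j x) θbar
          - gradient (fun x => (n : ℝ)⁻¹ * ∑ j : Fin n, f j x) θ‖ ^ 2
    ≤ (4 * L ^ 2 / (b : ℝ)) * ‖θ - θbar‖ ^ 2 :=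
  svrg_variance_bound_general n d b hb f L hdiff hlip θ θbar
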